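/- arXiv:2410.09122 — 3 statements merged into one kernel-verified Lean document; each statement's English description precedes it below -/
import Mathlib

section
/- Let Q be a finite simple graph with n vertices and m edges. Then the first Zagreb index of the transformation graph Q_{rs}^{++−} (the case p = r, q = s of Q_{rs}^{x(p) y(q) −}) equals (r(1−s)² + 2s(nr−2r−2))·M1(Q) + 2s·M2(Q) + s·F(Q) + nrm²s² + 4rsm²(1−s) + sm(nr−2r−2)². -/
/-- Classical `Fintype` instance for neighbor sets of graphs on finite types. -/
noncomputable instance fintypeNeighborSetOfFinite {W : Type*} [Finite W]
    (G : SimpleGraph W) (v : W) : Fintype (G.neighborSet v) :=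
  Fintype.ofFinite _

/-- Classical `Fintype` instance for the edge set of a graph on a finite type. -/
noncomputable instance fintypeEdgeSetOfFinite {W : Type*} [Finite W]
    (G : SimpleGraph W) : Fintype G.edgeSet :=
  Fintype.ofFinite _

/-- The first Zagreb index `M₁(G) = Σ_v d(v)²`. -/
noncomputable def zagrebM1 {W : Type*} [Fintype W] (G : SimpleGraph W) : ℕ :=
  ∑ v, G.degree v ^ 2

/-- The second Zagreb index `M₂(G) = Σ_{uv ∈ E(G)} d(u)·d(v)`. -/
noncomputable def zagrebM2 {W : Type*} [Fintype W] (G : SimpleGraph W) : ℕ :=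
  ∑ e ∈ G.edgeFinset,
    Sym2.lift ⟨fun u v => G.degree u * G.degree v, fun u v => Nat.mul_comm (G.degree u) (G.degree v)⟩ e

/-- The forgotten index `F(G) = Σ_v d(v)³`. -/
noncomputable def forgottenF {W : Type*} [Fintype W] (G : SimpleGraph W) : ℕ :=
  ∑ v, G.degree v ^ 3

/-- The `(r,s)`-generalised transformation graph `Q_{rs}^{x(p) y(q) -}`.
Its vertices are `r` copies of `V(Q)` (indexed by `Fin r`) together with `s`
copies of `E(Q)` (indexed by `Fin s`).  The copy `V_g` carries the adjacency of
`Q` when `g < p` and that of the complement when `g ≥ p`; the copy `E_h`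
carries line-graph adjacency (sharing an endpoint) when `h < q` and its
complement when `h ≥ q`; a vertex-copy vertex and an edge-copy vertex are
adjacent iff the vertex is NOT incident with the edge in `Q`. -/
def genTransMinus {V : Type*} (Q : SimpleGraph V) (r s p q : ℕ) :
    SimpleGraph ((Fin r × V) ⊕ (Fin s × Q.edgeSet)) :=
  SimpleGraph.fromRel (fun a b =>
    match a, b with
    | Sum.inl (g, α), Sum.inl (g', β) =>
        g = g' ∧ (((g : ℕ) < p ∧ Q.Adj α β) ∨ (¬ (g : ℕ) < p ∧ ¬ Q.Adj α β))
    | Sum.inr (h, e), Sum.inr (h', f) =>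
        h = h' ∧ (((h : ℕ) < q ∧ ∃ w, w ∈ (e : Sym2 V) ∧ w ∈ (f : Sym2 V)) ∨
                  (¬ (h : ℕ) < q ∧ ¬ ∃ w, w ∈ (e : Sym2 V) ∧ w ∈ (f : Sym2 V)))
    | Sum.inl (_, α), Sum.inr (_, e) => α ∉ (e : Sym2 V)
    | Sum.inr (_, e), Sum.inl (_, α) => α ∉ (e : Sym2 V))

open Finset Sum

namespace ZagrebAux

lemma degInt {W : Type*} [Fintype W] (G : SimpleGraph W) [DecidableRel G.Adj]
    [∀ v, Fintype (G.neighborSet v)] (v : W) :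
    (G.degree v : ℤ) = ∑ w, if G.Adj v w then (1:ℤ) else 0 := by
  have h1 : (Finset.univ.filter (G.Adj v)).card = G.degree v := by
    rw [← SimpleGraph.card_neighborSet_eq_degree, ← Set.toFinset_card]
    congr 1; ext w; simp
  rw [← h1, Finset.card_filter]
  push_cast
  rfl

variable {V : Type*} [Fintype V] (Q : SimpleGraph V)

lemma sumEdge (f : Sym2 V → ℤ) : (∑ e : Q.edgeSet, f ↑e) = ∑ e ∈ Q.edgeFinset, f e := by
  unfold SimpleGraph.edgeFinset
  rw [← Finset.sum_set_coe]

lemma incCount [DecidableEq V] (α : V) :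
    (∑ e ∈ Q.edgeFinset, if α ∈ e then (1:ℤ) else 0) = Q.degree α := by
  classical
  rw [Finset.sum_boole, ← SimpleGraph.card_incidenceFinset_eq_degree,
    SimpleGraph.incidenceFinset_eq_filter]

lemma sum_lift_add (f : V → ℤ) :
    ∑ e ∈ Q.edgeFinset, Sym2.lift ⟨fun u v => f u + f v, by intros; ring⟩ e
      = ∑ v, (Q.degree v : ℤ) * f v := by
  classical
  have key : ∀ e ∈ Q.edgeFinset,
      Sym2.lift ⟨fun u v => f u + f v, by intros; ring⟩ e
        = ∑ v, (if v ∈ e then (1:ℤ) else 0) * f v := by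
    intro e he
    revert he
    induction e using Sym2.ind with
    | _ u v =>
      intro he
      have hne : u ≠ v := (Q.mem_edgeSet.mp (SimpleGraph.mem_edgeFinset.mp he)).ne
      rw [Sym2.lift_mk]
      have hpt : ∀ w, (if w ∈ s(u,v) then (1:ℤ) else 0) * f w
          = (if w = u then f w else 0) + (if w = v then f w else 0) := by
        intro w
        by_cases h1 : w = u <;> by_cases h2 : w = v <;>
          simp_all [Sym2.mem_iff]
      rw [Finset.sum_congr rfl (fun w _ => hpt w), Finset.sum_add_distrib,
        Finset.sum_ite_eq', Finset.sum_ite_eq']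
      simp
  rw [Finset.sum_congr rfl key, Finset.sum_comm]
  refine Finset.sum_congr rfl fun v _ => ?_
  rw [← Finset.sum_mul, incCount]

variable {r s : ℕ}

lemma adj_ll (g g' : Fin r) (α β : V) :
    (genTransMinus Q r s r s).Adj (inl (g, α)) (inl (g', β)) ↔ g = g' ∧ Q.Adj α β := by
  simp only [genTransMinus, SimpleGraph.fromRel_adj, g.isLt, g'.isLt, true_and, not_true,
    false_and, or_false]
  constructor
  · rintro ⟨hne, (⟨rfl, h⟩ | ⟨rfl, h⟩)⟩
    · exact ⟨rfl, h⟩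
    · exact ⟨rfl, h.symm⟩
  · rintro ⟨rfl, h⟩
    exact ⟨by simp [h.ne], Or.inl ⟨rfl, h⟩⟩

lemma adj_lr (g : Fin r) (h : Fin s) (α : V) (e : Q.edgeSet) :
    (genTransMinus Q r s r s).Adj (inl (g, α)) (inr (h, e)) ↔ α ∉ (e : Sym2 V) := by
  simp [genTransMinus, SimpleGraph.fromRel_adj]

lemma adj_rl (g : Fin r) (h : Fin s) (α : V) (e : Q.edgeSet) :
    (genTransMinus Q r s r s).Adj (inr (h, e)) (inl (g, α)) ↔ α ∉ (e : Sym2 V) := by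
  simp [genTransMinus, SimpleGraph.fromRel_adj]

lemma adj_rr (h h' : Fin s) (e f : Q.edgeSet) :
    (genTransMinus Q r s r s).Adj (inr (h, e)) (inr (h', f)) ↔
      h = h' ∧ e ≠ f ∧ ∃ w, w ∈ (e : Sym2 V) ∧ w ∈ (f : Sym2 V) := by
  simp only [genTransMinus, SimpleGraph.fromRel_adj, h.isLt, h'.isLt, true_and, not_true,
    false_and, or_false]
  constructor
  · rintro ⟨hne, (⟨rfl, w, hw⟩ | ⟨rfl, w, hw1, hw2⟩)⟩
    · exact ⟨rfl, fun hef => hne (by rw [hef]), w, hw⟩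
    · exact ⟨rfl, fun hef => hne (by rw [hef]), w, hw2, hw1⟩
  · rintro ⟨rfl, hef, w, hw⟩
    exact ⟨by simp [hef], Or.inl ⟨rfl, w, hw⟩⟩

lemma deg_inl {n m : ℕ} (hn : Fintype.card V = n) (hm : Q.edgeFinset.card = m)
    (g : Fin r) (α : V) :
    ((genTransMinus Q r s r s).degree (inl (g, α)) : ℤ)
      = s * m + (1 - s) * Q.degree α := by
  classical
  rw [degInt, Fintype.sum_sum_type, Fintype.sum_prod_type, Fintype.sum_prod_type]
  simp only [adj_ll, adj_lr, ite_and]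
  have h1 : ∑ g' : Fin r, ∑ β : V, (if g = g' then (if Q.Adj α β then (1:ℤ) else 0) else 0)
      = (Q.degree α : ℤ) := by
    rw [Finset.sum_comm]
    have : ∀ β : V, (∑ g' : Fin r, if g = g' then (if Q.Adj α β then (1:ℤ) else 0) else 0)
        = (if Q.Adj α β then (1:ℤ) else 0) := by
      intro β
      rw [Finset.sum_ite_eq]
      simp
    rw [Finset.sum_congr rfl (fun β _ => this β), ← degInt]
  have h2 : ∀ h : Fin s, (∑ e : Q.edgeSet, if (α : V) ∉ (e : Sym2 V) then (1:ℤ) else 0)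
      = (m : ℤ) - Q.degree α := by
    intro h
    rw [sumEdge Q (fun e => if α ∉ e then (1:ℤ) else 0)]
    have : ∀ e ∈ Q.edgeFinset, (if α ∉ e then (1:ℤ) else 0)
        = 1 - (if α ∈ e then (1:ℤ) else 0) := by
      intro e _; by_cases hα : α ∈ e <;> simp [hα]
    rw [Finset.sum_congr rfl this, Finset.sum_sub_distrib, incCount, Finset.sum_const, hm]
    simp
  rw [h1]
  rw [Finset.sum_congr rfl (fun h _ => h2 h), Finset.sum_const]
  simp only [Finset.card_univ, Fintype.card_fin, nsmul_eq_mul]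
  ring

lemma deg_inr {n m : ℕ} (hn : Fintype.card V = n) (hm : Q.edgeFinset.card = m)
    (h : Fin s) (e : Q.edgeSet) :
    ((genTransMinus Q r s r s).degree (inr (h, e)) : ℤ)
      = Sym2.lift ⟨fun u v => (Q.degree u + Q.degree v : ℤ), fun u v => by ring⟩ (e : Sym2 V)
        + ((r : ℤ) * n - 2 * r - 2) := by
  classical
  obtain ⟨e, he⟩ := e
  revert he
  induction e using Sym2.ind with
  | _ u v =>
    intro he
    have hadj : Q.Adj u v := Q.mem_edgeSet.mp he
    have hne : u ≠ v := hadj.ne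
    rw [degInt, Fintype.sum_sum_type, Fintype.sum_prod_type, Fintype.sum_prod_type]
    simp only [adj_rl, adj_rr, ite_and, ne_eq, Subtype.ext_iff]
    have h1 : ∀ g : Fin r, (∑ α : V, if (α : V) ∉ (s(u,v) : Sym2 V) then (1:ℤ) else 0)
        = (n : ℤ) - 2 := by
      intro g
      have hpt : ∀ α : V, (if (α : V) ∉ (s(u,v) : Sym2 V) then (1:ℤ) else 0)
          = 1 - ((if α = u then (1:ℤ) else 0) + (if α = v then (1:ℤ) else 0)) := by
        intro α
        by_cases h1 : α = u <;> by_cases h2 : α = v <;> simp_all [Sym2.mem_iff]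
      rw [Finset.sum_congr rfl (fun α _ => hpt α), Finset.sum_sub_distrib,
        Finset.sum_add_distrib, Finset.sum_ite_eq', Finset.sum_ite_eq', Finset.sum_const]
      simp [hn]
    have hcore : (∑ f ∈ Q.edgeFinset, if ¬ (s(u,v) : Sym2 V) = f then
        (if ∃ w, w ∈ (s(u,v) : Sym2 V) ∧ w ∈ f then (1:ℤ) else 0) else 0)
        = (Q.degree u : ℤ) + Q.degree v - 2 := by
      have hpt : ∀ f ∈ Q.edgeFinset, (if ¬ (s(u,v) : Sym2 V) = f then
          (if ∃ w, w ∈ (s(u,v) : Sym2 V) ∧ w ∈ f then (1:ℤ) else 0) else 0)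
          = (if u ∈ f then (1:ℤ) else 0) + (if v ∈ f then (1:ℤ) else 0)
            - 2 * (if (s(u,v) : Sym2 V) = f then (1:ℤ) else 0) := by
        intro f hf
        by_cases hef : (s(u,v) : Sym2 V) = f
        · subst hef
          simp [Sym2.mem_iff]
        · have hshare : (∃ w, w ∈ (s(u,v) : Sym2 V) ∧ w ∈ f) ↔ (u ∈ f ∨ v ∈ f) := by
            constructor
            · rintro ⟨w, hw1, hw2⟩
              rw [Sym2.mem_iff] at hw1
              rcases hw1 with rfl | rfl
              · exact Or.inl hw2
              · exact Or.inr hw2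
            · rintro (hw | hw)
              · exact ⟨u, by simp [Sym2.mem_iff], hw⟩
              · exact ⟨v, by simp [Sym2.mem_iff], hw⟩
          simp only [hef, not_false_iff, if_true, if_false, hshare]
          by_cases hu : u ∈ f <;> by_cases hv : v ∈ f
          · exact absurd ((Sym2.mem_and_mem_iff hne).mp ⟨hu, hv⟩).symm hef
          all_goals simp [hu, hv]
      rw [Finset.sum_congr rfl hpt, Finset.sum_sub_distrib, Finset.sum_add_distrib,
        incCount, incCount, ← Finset.mul_sum, Finset.sum_ite_eq,
        if_pos (SimpleGraph.mem_edgeFinset.mpr he)]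
      ring
    have h2 : (∑ h' : Fin s, ∑ f : Q.edgeSet,
        if h = h' then (if ¬ (s(u,v) : Sym2 V) = (f : Sym2 V) then
          (if ∃ w, w ∈ (s(u,v) : Sym2 V) ∧ w ∈ (f : Sym2 V) then (1:ℤ) else 0) else 0) else 0)
        = (Q.degree u : ℤ) + Q.degree v - 2 := by
      have hsw : ∀ h' : Fin s, (∑ f : Q.edgeSet,
          if h = h' then (if ¬ (s(u,v) : Sym2 V) = (f : Sym2 V) then
            (if ∃ w, w ∈ (s(u,v) : Sym2 V) ∧ w ∈ (f : Sym2 V) then (1:ℤ) else 0) else 0) else 0)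
          = if h = h' then (∑ f : Q.edgeSet, (if ¬ (s(u,v) : Sym2 V) = (f : Sym2 V) then
            (if ∃ w, w ∈ (s(u,v) : Sym2 V) ∧ w ∈ (f : Sym2 V) then (1:ℤ) else 0) else 0)) else 0 := by
        intro h'
        split_ifs <;> simp
      rw [Finset.sum_congr rfl (fun h' _ => hsw h'), Finset.sum_ite_eq]
      simp only [Finset.mem_univ, if_true]
      rw [sumEdge Q (fun f => if ¬ (s(u,v) : Sym2 V) = f then
        (if ∃ w, w ∈ (s(u,v) : Sym2 V) ∧ w ∈ f then (1:ℤ) else 0) else 0)]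
      exact hcore
    rw [Finset.sum_congr rfl (fun g _ => h1 g), h2, Finset.sum_const]
    simp only [Finset.card_univ, Fintype.card_fin, nsmul_eq_mul, Sym2.lift_mk]
    ring

lemma sum_lift_add' (f : V → ℤ) (F : {g : V → V → ℤ // ∀ a b, g a b = g b a})
    (hF : ∀ u v, F.1 u v = f u + f v) :
    ∑ e ∈ Q.edgeFinset, Sym2.lift F e = ∑ v, (Q.degree v : ℤ) * f v := by
  have hFe : F = ⟨fun u v => f u + f v, by intros; ring⟩ :=
    Subtype.ext (by funext u v; exact hF u v)
  rw [hFe]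
  exact sum_lift_add Q f

end ZagrebAux

open ZagrebAux in
/-- First Zagreb index of `Q_{rs}^{++-}`, i.e. the case `p = r`, `q = s`. -/
theorem zagrebM1_genTransMinus_ppm
    {V : Type*} [Fintype V] (Q : SimpleGraph V)
    (r s n m : ℕ) (hr : 0 < r) (hs : 0 < s)
    (hn : Fintype.card V = n) (hm : Q.edgeFinset.card = m) :
    (zagrebM1 (genTransMinus Q r s r s) : ℤ) =
      ((r : ℤ) * (1 - (s : ℤ)) ^ 2 + 2 * s * ((n : ℤ) * r - 2 * r - 2)) * zagrebM1 Q
      + 2 * s * zagrebM2 Q + s * forgottenF Q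
      + (n : ℤ) * r * (m : ℤ) ^ 2 * (s : ℤ) ^ 2
      + 4 * r * s * (m : ℤ) ^ 2 * (1 - (s : ℤ))
      + (s : ℤ) * m * ((n : ℤ) * r - 2 * r - 2) ^ 2 := by
  have hdegsum : (∑ v, (Q.degree v : ℤ)) = 2 * m := by
    have h2 : ∑ v, Q.degree v = 2 * Q.edgeFinset.card := by
      classical
      convert Q.sum_degrees_eq_twice_card_edges using 2 <;> congr!
    rw [hm] at h2
    exact_mod_cast h2
  classical
  set G := genTransMinus Q r s r s with hG
  set A : ℤ := (r : ℤ) * n - 2 * r - 2 with hA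
  set L : Sym2 V → ℤ :=
    Sym2.lift ⟨fun u v => (Q.degree u + Q.degree v : ℤ), fun u v => by ring⟩ with hL
  -- basic casts
  have hM1Q : (zagrebM1 Q : ℤ) = ∑ v, (Q.degree v : ℤ) ^ 2 := by
    unfold zagrebM1; push_cast; rfl
  have hFQ : (forgottenF Q : ℤ) = ∑ v, (Q.degree v : ℤ) ^ 3 := by
    unfold forgottenF; push_cast; rfl
  have hM2Q : (zagrebM2 Q : ℤ) = ∑ e ∈ Q.edgeFinset,
      Sym2.lift ⟨fun u v => (Q.degree u : ℤ) * (Q.degree v : ℤ), fun u v => by ring⟩ e := by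
    unfold zagrebM2
    push_cast
    refine Finset.sum_congr rfl fun e _ => ?_
    induction e using Sym2.ind with
    | _ u v => simp [Sym2.lift_mk]
  -- main splitting
  have hstart : (zagrebM1 G : ℤ) = ∑ x, ((G.degree x : ℤ)) ^ 2 := by
    unfold zagrebM1; push_cast; rfl
  rw [hstart, Fintype.sum_sum_type, Fintype.sum_prod_type, Fintype.sum_prod_type]
  have e1 : ∀ g : Fin r, (∑ α : V, ((G.degree (Sum.inl (g, α)) : ℤ)) ^ 2)
      = ∑ α : V, ((s : ℤ) * m + (1 - s) * Q.degree α) ^ 2 :=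
    fun g => Finset.sum_congr rfl fun α _ => by rw [hG, deg_inl Q hn hm]
  have e2 : ∀ h : Fin s, (∑ e : Q.edgeSet, ((G.degree (Sum.inr (h, e)) : ℤ)) ^ 2)
      = ∑ e ∈ Q.edgeFinset, (L e + A) ^ 2 := by
    intro h
    rw [← sumEdge Q (fun e => (L e + A) ^ 2)]
    exact Finset.sum_congr rfl fun e _ => by rw [hG, deg_inr Q hn hm]
  rw [Finset.sum_congr rfl (fun g _ => e1 g), Finset.sum_congr rfl (fun h _ => e2 h),
    Finset.sum_const, Finset.sum_const]
  simp only [Finset.card_univ, Fintype.card_fin, nsmul_eq_mul]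
  -- vertex part
  have hvert : (∑ α : V, ((s : ℤ) * m + (1 - s) * Q.degree α) ^ 2)
      = (n : ℤ) * ((s : ℤ) * m) ^ 2 + 2 * ((s : ℤ) * m) * (1 - s) * (2 * m)
        + (1 - s) ^ 2 * zagrebM1 Q := by
    have hex : ∀ α : V, ((s : ℤ) * m + (1 - s) * Q.degree α) ^ 2
        = ((s : ℤ) * m) ^ 2 + 2 * ((s : ℤ) * m) * (1 - s) * (Q.degree α : ℤ)
          + (1 - s) ^ 2 * (Q.degree α : ℤ) ^ 2 := fun α => by ring
    rw [Finset.sum_congr rfl (fun α _ => hex α), Finset.sum_add_distrib,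
      Finset.sum_add_distrib, Finset.sum_const, ← Finset.mul_sum, ← Finset.mul_sum,
      hdegsum, ← hM1Q]
    simp [hn]
  -- edge part
  have hLsum : (∑ e ∈ Q.edgeFinset, L e) = zagrebM1 Q := by
    rw [hL, sum_lift_add' Q (fun v => (Q.degree v : ℤ)) _ (fun u v => rfl), hM1Q]
    exact Finset.sum_congr rfl fun v _ => by ring
  have hL2sum : (∑ e ∈ Q.edgeFinset,
      Sym2.lift ⟨fun u v => (Q.degree u : ℤ) ^ 2 + (Q.degree v : ℤ) ^ 2, fun u v => by ring⟩ e)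
      = forgottenF Q := by
    rw [sum_lift_add' Q (fun v => (Q.degree v : ℤ) ^ 2) _ (fun u v => rfl), hFQ]
    exact Finset.sum_congr rfl fun v _ => by ring
  have hedge : (∑ e ∈ Q.edgeFinset, (L e + A) ^ 2)
      = (forgottenF Q : ℤ) + 2 * zagrebM2 Q + 2 * A * zagrebM1 Q + m * A ^ 2 := by
    have hex : ∀ e ∈ Q.edgeFinset, (L e + A) ^ 2
        = Sym2.lift ⟨fun u v => (Q.degree u : ℤ) ^ 2 + (Q.degree v : ℤ) ^ 2, fun u v => by ring⟩ e
          + 2 * Sym2.lift ⟨fun u v => (Q.degree u : ℤ) * (Q.degree v : ℤ), fun u v => by ring⟩ e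
          + 2 * A * L e + A ^ 2 := by
      intro e _
      rw [hL]
      induction e using Sym2.ind with
      | _ u v => simp only [Sym2.lift_mk]; ring
    rw [Finset.sum_congr rfl hex, Finset.sum_add_distrib, Finset.sum_add_distrib,
      Finset.sum_add_distrib, Finset.sum_const, hm, ← Finset.mul_sum, ← Finset.mul_sum,
      hLsum, hL2sum, ← hM2Q]
    push_cast
    ring
  rw [hvert, hedge]
  push_cast
  ring
end

section
/- Let Q be a finite simple graph with n vertices and m edges. Then the first Zagreb index of the transformation graph Q_{rs}^{−+−} (the case p = 0, q = s of Q_{rs}^{x(p) y(q) −}) equals (r(s+1)² + 2s(nr−2r−2))·M1(Q) + 2s·M2(Q) + s·F(Q) + nr(n+sm−1)² − 4mr(s+1)(n+sm−1) + ms(nr−2r−2)². -/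
open Finset

private lemma degree_eq_degree {W : Type*} {G : SimpleGraph W} {v : W}
    (i1 i2 : Fintype (G.neighborSet v)) :
    @SimpleGraph.degree _ G v i1 = @SimpleGraph.degree _ G v i2 := by
  rw [Subsingleton.elim i1 i2]

private lemma edgeFinset_eq_edgeFinset {W : Type*} {G : SimpleGraph W}
    (i1 i2 : Fintype G.edgeSet) :
    @SimpleGraph.edgeFinset _ G i1 = @SimpleGraph.edgeFinset _ G i2 := by
  rw [Subsingleton.elim i1 i2]

section Aux
variable {V : Type*} [Fintype V] (Q : SimpleGraph V)

private lemma degree_eq_sum {W : Type*} [Fintype W] (G : SimpleGraph W) [DecidableRel G.Adj]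
    (v : W) [Fintype (G.neighborSet v)] :
    G.degree v = ∑ w, if G.Adj v w then 1 else 0 := by
  have h : G.neighborFinset v = Finset.univ.filter (fun w => G.Adj v w) := by
    ext w
    simp [SimpleGraph.neighborFinset, Set.mem_toFinset]
  unfold SimpleGraph.degree
  rw [h, Finset.card_filter]

private lemma sum_edge_subtype {M : Type*} [AddCommMonoid M] (f : Sym2 V → M) :
    ∑ e : Q.edgeSet, f e = ∑ e ∈ Q.edgeFinset, f e := by
  rw [← Finset.sum_coe_sort Q.edgeFinset f]
  exact Fintype.sum_equiv (Equiv.subtypeEquivRight (fun x => by simp)) _ _ (fun x => rfl)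

private lemma sum_lift_add (f : V → ℕ) :
    ∑ e ∈ Q.edgeFinset, Sym2.lift ⟨fun u v => f u + f v, fun u v => Nat.add_comm _ _⟩ e
      = ∑ v, Q.degree v * f v := by
  classical
  have h1 : ∑ d : Q.Dart, f d.fst
      = ∑ e ∈ Q.edgeFinset, Sym2.lift ⟨fun u v => f u + f v, fun u v => Nat.add_comm _ _⟩ e := by
    rw [← Finset.sum_fiberwise_of_maps_to (g := SimpleGraph.Dart.edge) (t := Q.edgeFinset)
        (fun d _ => by simp [SimpleGraph.Dart.edge_mem])]
    refine Finset.sum_congr (edgeFinset_eq_edgeFinset _ _) fun e he => ?_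
    rw [SimpleGraph.mem_edgeFinset] at he
    induction e with
    | _ u v =>
      have hadj : Q.Adj u v := he
      have hfib : (Finset.univ.filter fun d : Q.Dart => d.edge = s(u,v))
          = {(⟨(u,v), hadj⟩ : Q.Dart), (⟨(u,v), hadj⟩ : Q.Dart).symm} := by
        convert (SimpleGraph.Dart.edge_fiber (⟨(u,v), hadj⟩ : Q.Dart))
        rfl
      rw [hfib, Finset.sum_pair (⟨(u,v), hadj⟩ : Q.Dart).symm_ne.symm]
      simp [SimpleGraph.Dart.symm]
  have h2 : ∑ d : Q.Dart, f d.fst = ∑ v, Q.degree v * f v := by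
    rw [← Finset.sum_fiberwise_of_maps_to (g := fun d : Q.Dart => d.fst) (t := Finset.univ)
        (fun d _ => Finset.mem_univ _)]
    refine Finset.sum_congr rfl fun v _ => ?_
    rw [Finset.sum_congr rfl (fun d hd => by rw [(Finset.mem_filter.1 hd).2]),
      Finset.sum_const, smul_eq_mul]
    congr 1
    exact (Q.dart_fst_fiber_card_eq_degree v).trans (degree_eq_degree _ _)
  rw [← h1, h2]

private lemma sum_ite_mem_edge (α : V) [DecidableEq V] :
    ∑ e ∈ Q.edgeFinset, (if α ∈ e then 1 else 0) = Q.degree α := by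
  have key := sum_lift_add Q (fun v => if v = α then 1 else 0)
  have h2 : ∑ v, Q.degree v * (if v = α then 1 else 0) = Q.degree α := by
    rw [Finset.sum_congr rfl (fun v _ => by rw [mul_ite, mul_one, mul_zero]),
      Finset.sum_ite_eq' Finset.univ α (fun v => Q.degree v), if_pos (Finset.mem_univ α)]
  rw [← h2, ← key]
  refine Finset.sum_congr rfl fun e he => ?_
  rw [SimpleGraph.mem_edgeFinset] at he
  induction e with
  | _ u v =>
    have hne : u ≠ v := Q.ne_of_adj he
    simp only [Sym2.lift_mk, Sym2.mem_iff]
    by_cases hu : u = α <;> by_cases hv : v = α <;> simp_all [eq_comm]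

private lemma handshake :
    ∑ v, Q.degree v = 2 * Q.edgeFinset.card := by
  classical
  have h := Q.sum_degrees_eq_twice_card_edges
  calc ∑ v, Q.degree v = ∑ v, Q.degree v * 1 := by simp
  _ = ∑ e ∈ Q.edgeFinset, Sym2.lift ⟨fun u v => 1 + 1, fun u v => rfl⟩ e := (sum_lift_add Q 1).symm
  _ = ∑ e ∈ Q.edgeFinset, 2 := by
      refine Finset.sum_congr rfl fun e _ => ?_
      induction e with
      | _ u v => simp
  _ = 2 * Q.edgeFinset.card := by rw [Finset.sum_const, smul_eq_mul, mul_comm]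

end Aux
section Adj
variable {V : Type*} (Q : SimpleGraph V) (r s : ℕ)

private lemma adj_ll (g g' : Fin r) (α β : V) :
    (genTransMinus Q r s 0 s).Adj (Sum.inl (g, α)) (Sum.inl (g', β)) ↔
      g = g' ∧ α ≠ β ∧ ¬ Q.Adj α β := by
  have hc := Q.adj_comm α β
  unfold genTransMinus
  rw [SimpleGraph.fromRel_adj]
  simp only [Nat.not_lt_zero, false_and, false_or, not_false_iff, true_and, ne_eq,
    Sum.inl.injEq, Prod.mk.injEq, not_and]
  constructor
  · rintro ⟨h1, h2⟩
    rcases h2 with ⟨rfl, h⟩ | ⟨rfl, h⟩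
    · exact ⟨rfl, h1 rfl, h⟩
    · exact ⟨rfl, h1 rfl, fun h' => h (hc.mp h')⟩
  · rintro ⟨rfl, h2, h3⟩
    exact ⟨fun _ => h2, Or.inl ⟨rfl, h3⟩⟩

private lemma adj_lr (g : Fin r) (h : Fin s) (α : V) (e : Q.edgeSet) :
    (genTransMinus Q r s 0 s).Adj (Sum.inl (g, α)) (Sum.inr (h, e)) ↔
      α ∉ (e : Sym2 V) := by
  unfold genTransMinus
  rw [SimpleGraph.fromRel_adj]
  simp

private lemma adj_rr (h h' : Fin s) (e f : Q.edgeSet) :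
    (genTransMinus Q r s 0 s).Adj (Sum.inr (h, e)) (Sum.inr (h', f)) ↔
      h = h' ∧ e ≠ f ∧ ∃ w, w ∈ (e : Sym2 V) ∧ w ∈ (f : Sym2 V) := by
  have hlt : (h : ℕ) < s := h.isLt
  have hlt' : (h' : ℕ) < s := h'.isLt
  unfold genTransMinus
  rw [SimpleGraph.fromRel_adj]
  simp only [hlt, hlt', true_and, not_true, false_and, or_false, ne_eq,
    Sum.inr.injEq, Prod.mk.injEq, not_and]
  constructor
  · rintro ⟨h1, h2⟩
    rcases h2 with ⟨rfl, w, hw1, hw2⟩ | ⟨rfl, w, hw1, hw2⟩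
    · exact ⟨rfl, h1 rfl, w, hw1, hw2⟩
    · exact ⟨rfl, h1 rfl, w, hw2, hw1⟩
  · rintro ⟨rfl, h2, w, hw1, hw2⟩
    exact ⟨fun _ => h2, Or.inl ⟨rfl, w, hw1, hw2⟩⟩

end Adj

section Deg
variable {V : Type*} [Fintype V] (Q : SimpleGraph V) (r s : ℕ)

private lemma degA (g : Fin r) (α : V) :
    (genTransMinus Q r s 0 s).degree (Sum.inl (g, α)) + (s + 1) * Q.degree α + 1
      = Fintype.card V + s * Q.edgeFinset.card := by
  classical
  set G := genTransMinus Q r s 0 s with hGdef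
  have key : G.degree (Sum.inl (g, α)) =
      (∑ β : V, if (α ≠ β ∧ ¬ Q.Adj α β) then 1 else 0)
      + s * ∑ e ∈ Q.edgeFinset, (if α ∉ e then 1 else 0) := by
    rw [degree_eq_sum, Fintype.sum_sum_type]
    congr 1
    · rw [Fintype.sum_prod_type]
      simp only [hGdef, adj_ll Q r s, ite_and]
      rw [Finset.sum_comm]
      refine Finset.sum_congr rfl fun β _ => ?_
      rw [Finset.sum_ite_eq, if_pos (Finset.mem_univ g)]
    · rw [Fintype.sum_prod_type]
      simp only [hGdef, adj_lr Q r s]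
      rw [Finset.sum_const, Finset.card_univ, Fintype.card_fin, smul_eq_mul]
      congr 1
      exact sum_edge_subtype Q (fun z => if α ∉ z then 1 else 0)
  have c1 : (∑ β : V, if (α ≠ β ∧ ¬ Q.Adj α β) then 1 else 0) + Q.degree α + 1
      = Fintype.card V := by
    have hpt : ∀ β : V, (if (α ≠ β ∧ ¬ Q.Adj α β) then 1 else 0)
        + (if Q.Adj α β then 1 else 0) + (if β = α then 1 else 0) = 1 := by
      intro β
      by_cases h1 : Q.Adj α β
      · have hne := Q.ne_of_adj h1
        simp [h1, hne, Ne.symm hne]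
      · by_cases h2 : β = α
        · subst h2; simp [h1]
        · simp [h1, h2, Ne.symm h2]
    have htot : (∑ β : V, if (α ≠ β ∧ ¬ Q.Adj α β) then 1 else 0)
        + (∑ β : V, if Q.Adj α β then 1 else 0)
        + (∑ β : V, if β = α then 1 else 0) = Fintype.card V := by
      rw [← Finset.sum_add_distrib, ← Finset.sum_add_distrib,
        Finset.sum_congr rfl (fun β _ => hpt β)]
      simp
    rw [Finset.sum_ite_eq' Finset.univ α (fun _ => 1), if_pos (Finset.mem_univ α)] at htot
    rw [degree_eq_sum Q α]
    exact htot
  have c2 : (∑ e ∈ Q.edgeFinset, if α ∉ e then 1 else 0) + Q.degree α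
      = Q.edgeFinset.card := by
    have htot : ∑ e ∈ Q.edgeFinset, ((if α ∉ e then 1 else 0) + (if α ∈ e then 1 else 0))
        = Q.edgeFinset.card := by
      rw [Finset.sum_congr rfl (fun e _ => by by_cases h : α ∈ e <;> simp [h] : ∀ e ∈ Q.edgeFinset, ((if α ∉ e then 1 else 0) + (if α ∈ e then 1 else 0)) = 1)]
      simp
    rw [Finset.sum_add_distrib, sum_ite_mem_edge Q α] at htot
    exact htot
  rw [key, ← c1, ← c2]
  ring

private lemma degB (h : Fin s) (e : Q.edgeSet) (u v : V) (huv : (e : Sym2 V) = s(u, v)) :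
    (genTransMinus Q r s 0 s).degree (Sum.inr (h, e)) + 2 + 2 * r
      = r * Fintype.card V + (Q.degree u + Q.degree v) := by
  classical
  set G := genTransMinus Q r s 0 s with hGdef
  have hadj : Q.Adj u v := by
    have := e.2
    rw [huv, SimpleGraph.mem_edgeSet] at this
    exact this
  have hne : u ≠ v := Q.ne_of_adj hadj
  have key : G.degree (Sum.inr (h, e)) =
      r * (∑ β : V, if β ∉ (e : Sym2 V) then 1 else 0)
      + ∑ f ∈ Q.edgeFinset,
          (if ((e : Sym2 V) ≠ f ∧ ∃ w, w ∈ (e : Sym2 V) ∧ w ∈ f) then 1 else 0) := by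
    rw [degree_eq_sum, Fintype.sum_sum_type]
    congr 1
    · rw [Fintype.sum_prod_type]
      have hadjc : ∀ (g : Fin r) (β : V),
          G.Adj (Sum.inr (h, e)) (Sum.inl (g, β)) ↔ β ∉ (e : Sym2 V) := by
        intro g β
        rw [SimpleGraph.adj_comm]
        exact adj_lr Q r s g h β e
      simp only [hadjc]
      rw [Finset.sum_const, Finset.card_univ, Fintype.card_fin, smul_eq_mul]
    · rw [Fintype.sum_prod_type]
      simp only [hGdef, adj_rr Q r s, ite_and]
      rw [Finset.sum_comm]
      rw [Finset.sum_congr rfl (fun f _ => by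
        rw [Finset.sum_ite_eq, if_pos (Finset.mem_univ h)])]
      have hconv := sum_edge_subtype Q
        (fun z => if (e : Sym2 V) ≠ z ∧ ∃ w, w ∈ (e : Sym2 V) ∧ w ∈ z then 1 else 0)
      simp only [ite_and] at hconv
      rw [← hconv]
      refine Finset.sum_congr rfl fun f _ => ?_
      congr 1
      simp [Ne, Subtype.ext_iff]
  have c1 : (∑ β : V, if β ∉ (e : Sym2 V) then 1 else 0) + 2 = Fintype.card V := by
    have hpt : ∀ β : V, (if β ∉ (e : Sym2 V) then 1 else 0)
        + ((if β = u then 1 else 0) + (if β = v then 1 else 0)) = 1 := by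
      intro β
      by_cases h1 : β = u
      · subst h1; simp [huv, hne]
      · by_cases h2 : β = v
        · subst h2; simp [huv, Ne.symm hne, h1]
        · simp [huv, h1, h2, Sym2.mem_iff]
    have h2' : (2 : ℕ) = ∑ β : V, ((if β = u then 1 else 0) + (if β = v then 1 else 0)) := by
      rw [Finset.sum_add_distrib,
        Finset.sum_ite_eq' Finset.univ u (fun _ => 1), if_pos (Finset.mem_univ u),
        Finset.sum_ite_eq' Finset.univ v (fun _ => 1), if_pos (Finset.mem_univ v)]
    have htot : (∑ β : V, if β ∉ (e : Sym2 V) then 1 else 0)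
        + (∑ β : V, ((if β = u then 1 else 0) + (if β = v then 1 else 0)))
        = Fintype.card V := by
      rw [← Finset.sum_add_distrib, Finset.sum_congr rfl (fun β _ => hpt β)]
      simp
    rw [← h2'] at htot
    exact htot
  have c2 : (∑ f ∈ Q.edgeFinset,
        (if ((e : Sym2 V) ≠ f ∧ ∃ w, w ∈ (e : Sym2 V) ∧ w ∈ f) then 1 else 0)) + 2
      = Q.degree u + Q.degree v := by
    have he_mem : (e : Sym2 V) ∈ Q.edgeFinset := by
      rw [SimpleGraph.mem_edgeFinset]; exact e.2
    have h2' : (2 : ℕ) = ∑ f ∈ Q.edgeFinset, if f = (e : Sym2 V) then 2 else 0 := by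
      rw [Finset.sum_ite_eq' Q.edgeFinset (e : Sym2 V) (fun _ => 2), if_pos he_mem]
    rw [← sum_ite_mem_edge Q u, ← sum_ite_mem_edge Q v, h2',
      ← Finset.sum_add_distrib, ← Finset.sum_add_distrib]
    refine Finset.sum_congr rfl fun z hz => ?_
    rw [SimpleGraph.mem_edgeFinset] at hz
    by_cases hze : z = (e : Sym2 V)
    · subst hze
      simp [huv]
    · have hez : ¬((e : Sym2 V) = z) := fun hh => hze hh.symm
      have hx : (∃ w, w ∈ (e : Sym2 V) ∧ w ∈ z) ↔ (u ∈ z ∨ v ∈ z) := by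
        rw [huv]
        constructor
        · rintro ⟨w, hw1, hw2⟩
          rcases Sym2.mem_iff.mp hw1 with rfl | rfl
          exacts [Or.inl hw2, Or.inr hw2]
        · rintro (hw | hw)
          exacts [⟨u, Sym2.mem_mk_left u v, hw⟩, ⟨v, Sym2.mem_mk_right u v, hw⟩]
      by_cases hu : u ∈ z <;> by_cases hv : v ∈ z
      · exfalso
        apply hze
        rw [huv]
        exact (Sym2.mem_and_mem_iff hne).mp ⟨hu, hv⟩
      all_goals simp [hez, hze, hx, hu, hv]
  rw [key, ← c1, ← c2]
  ring

end Deg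
section EdgeSums
variable {V : Type*} [Fintype V] (Q : SimpleGraph V)

private lemma sum_D :
    ∑ e ∈ Q.edgeFinset,
        Sym2.lift ⟨fun u v => Q.degree u + Q.degree v, fun u v => Nat.add_comm _ _⟩ e
      = zagrebM1 Q := by
  rw [sum_lift_add Q (fun v => Q.degree v)]
  unfold zagrebM1
  exact Finset.sum_congr rfl fun v _ => by ring

private lemma sum_D_sq :
    ∑ e ∈ Q.edgeFinset,
        (Sym2.lift ⟨fun u v => Q.degree u + Q.degree v, fun u v => Nat.add_comm _ _⟩ e) ^ 2
      = forgottenF Q + 2 * zagrebM2 Q := by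
  have hpt : ∀ z : Sym2 V,
      (Sym2.lift ⟨fun u v => Q.degree u + Q.degree v, fun u v => Nat.add_comm _ _⟩ z) ^ 2
        = Sym2.lift ⟨fun u v => Q.degree u ^ 2 + Q.degree v ^ 2, fun u v => Nat.add_comm _ _⟩ z
          + 2 * Sym2.lift ⟨fun u v => Q.degree u * Q.degree v,
              fun u v => Nat.mul_comm (Q.degree u) (Q.degree v)⟩ z := by
    intro z
    refine Sym2.inductionOn z fun u v => ?_
    simp only [Sym2.lift_mk]
    ring
  rw [Finset.sum_congr rfl (fun z _ => hpt z), Finset.sum_add_distrib, ← Finset.mul_sum]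
  have h1 : ∑ e ∈ Q.edgeFinset,
      Sym2.lift ⟨fun u v => Q.degree u ^ 2 + Q.degree v ^ 2, fun u v => Nat.add_comm _ _⟩ e
      = forgottenF Q := by
    rw [sum_lift_add Q (fun v => Q.degree v ^ 2)]
    unfold forgottenF
    exact Finset.sum_congr rfl fun v _ => by ring
  rw [h1]
  rfl

end EdgeSums
/-- First Zagreb index of `Q_{rs}^{-+-}`, i.e. the case `p = 0`, `q = s`. -/
theorem zagrebM1_genTransMinus_mpm
    {V : Type*} [Fintype V] (Q : SimpleGraph V)
    (r s n m : ℕ) (hr : 0 < r) (hs : 0 < s)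
    (hn : Fintype.card V = n) (hm : Q.edgeFinset.card = m) :
    (zagrebM1 (genTransMinus Q r s 0 s) : ℤ) =
      ((r : ℤ) * ((s : ℤ) + 1) ^ 2 + 2 * s * ((n : ℤ) * r - 2 * r - 2)) * zagrebM1 Q
      + 2 * s * zagrebM2 Q + s * forgottenF Q
      + (n : ℤ) * r * ((n : ℤ) + s * m - 1) ^ 2
      - 4 * m * r * ((s : ℤ) + 1) * ((n : ℤ) + s * m - 1)
      + (m : ℤ) * s * ((n : ℤ) * r - 2 * r - 2) ^ 2 := by
  classical
  subst hn
  subst hm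
  set G := genTransMinus Q r s 0 s with hGdef
  set K : ℤ := (Fintype.card V : ℤ) + (s : ℤ) * (Q.edgeFinset.card : ℤ) - 1 with hK
  set C : ℤ := (Fintype.card V : ℤ) * (r : ℤ) - 2 * (r : ℤ) - 2 with hC
  have hHand : ∑ α : V, (Q.degree α : ℤ) = 2 * (Q.edgeFinset.card : ℤ) := by
    have h := handshake Q
    exact_mod_cast congrArg (fun x : ℕ => (x : ℤ)) h
  have hM1 : ∑ α : V, (Q.degree α : ℤ) ^ 2 = (zagrebM1 Q : ℤ) := by
    unfold zagrebM1; push_cast; rfl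
  have hD1 : ∑ e ∈ Q.edgeFinset,
      ((Sym2.lift ⟨fun u v => Q.degree u + Q.degree v, fun u v => Nat.add_comm _ _⟩ e : ℕ) : ℤ)
      = (zagrebM1 Q : ℤ) := by
    rw [← sum_D Q]; push_cast; rfl
  have hD2 : ∑ e ∈ Q.edgeFinset,
      ((Sym2.lift ⟨fun u v => Q.degree u + Q.degree v, fun u v => Nat.add_comm _ _⟩ e : ℕ) : ℤ) ^ 2
      = (forgottenF Q : ℤ) + 2 * (zagrebM2 Q : ℤ) := by
    have h := sum_D_sq Q
    have h' := congrArg (fun x : ℕ => (x : ℤ)) h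
    push_cast at h'
    exact h'
  have hcast : (zagrebM1 G : ℤ)
      = (∑ g : Fin r, ∑ α : V, (G.degree (Sum.inl (g, α)) : ℤ) ^ 2)
      + (∑ h : Fin s, ∑ e : Q.edgeSet, (G.degree (Sum.inr (h, e)) : ℤ) ^ 2) := by
    unfold zagrebM1
    push_cast
    rw [Fintype.sum_sum_type, Fintype.sum_prod_type, Fintype.sum_prod_type]
  have dA : ∀ (g : Fin r) (α : V), (G.degree (Sum.inl (g, α)) : ℤ)
      = K - ((s : ℤ) + 1) * (Q.degree α : ℤ) := by
    intro g α
    have h := degA Q r s g α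
    have h' := congrArg (fun x : ℕ => (x : ℤ)) h
    push_cast at h'
    rw [hK]
    linarith
  have dB : ∀ (h : Fin s) (e : Q.edgeSet), (G.degree (Sum.inr (h, e)) : ℤ)
      = C + ((Sym2.lift ⟨fun u v => Q.degree u + Q.degree v, fun u v => Nat.add_comm _ _⟩
          ((e : Sym2 V)) : ℕ) : ℤ) := by
    intro h e
    obtain ⟨z, hz⟩ := e
    revert hz
    refine Sym2.inductionOn z fun u v => ?_
    intro hz
    have hb := degB Q r s h ⟨s(u, v), hz⟩ u v rfl
    have h' := congrArg (fun x : ℕ => (x : ℤ)) hb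
    push_cast at h'
    simp only [Sym2.lift_mk]
    rw [hC]
    push_cast
    linarith
  have hinnerA : ∀ g : Fin r, ∑ α : V, (G.degree (Sum.inl (g, α)) : ℤ) ^ 2
      = (Fintype.card V : ℤ) * K ^ 2
        - 2 * ((s : ℤ) + 1) * K * (2 * (Q.edgeFinset.card : ℤ))
        + ((s : ℤ) + 1) ^ 2 * (zagrebM1 Q : ℤ) := by
    intro g
    calc ∑ α : V, (G.degree (Sum.inl (g, α)) : ℤ) ^ 2
        = ∑ α : V, (K - ((s : ℤ) + 1) * (Q.degree α : ℤ)) ^ 2 := by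
          refine Finset.sum_congr rfl fun α _ => ?_
          rw [dA g α]
      _ = ∑ α : V, (K ^ 2 - 2 * ((s : ℤ) + 1) * K * (Q.degree α : ℤ)
            + ((s : ℤ) + 1) ^ 2 * (Q.degree α : ℤ) ^ 2) := by
          refine Finset.sum_congr rfl fun α _ => by ring
      _ = _ := by
          rw [Finset.sum_add_distrib, Finset.sum_sub_distrib, Finset.sum_const,
            Finset.card_univ, ← Finset.mul_sum, ← Finset.mul_sum, hHand, hM1, nsmul_eq_mul]
  have hA : (∑ g : Fin r, ∑ α : V, (G.degree (Sum.inl (g, α)) : ℤ) ^ 2)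
      = (r : ℤ) * ((Fintype.card V : ℤ) * K ^ 2
          - 2 * ((s : ℤ) + 1) * K * (2 * (Q.edgeFinset.card : ℤ))
          + ((s : ℤ) + 1) ^ 2 * (zagrebM1 Q : ℤ)) := by
    rw [Finset.sum_congr rfl (fun g _ => hinnerA g), Finset.sum_const, Finset.card_univ,
      Fintype.card_fin, nsmul_eq_mul]
  have hinnerB : ∀ h : Fin s, ∑ e : Q.edgeSet, (G.degree (Sum.inr (h, e)) : ℤ) ^ 2
      = (Q.edgeFinset.card : ℤ) * C ^ 2 + 2 * C * (zagrebM1 Q : ℤ)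
        + ((forgottenF Q : ℤ) + 2 * (zagrebM2 Q : ℤ)) := by
    intro h
    calc ∑ e : Q.edgeSet, (G.degree (Sum.inr (h, e)) : ℤ) ^ 2
        = ∑ e : Q.edgeSet, (C + ((Sym2.lift ⟨fun u v => Q.degree u + Q.degree v,
              fun u v => Nat.add_comm _ _⟩ ((e : Sym2 V)) : ℕ) : ℤ)) ^ 2 := by
          refine Finset.sum_congr rfl fun e _ => ?_
          rw [dB h e]
      _ = ∑ z ∈ Q.edgeFinset, (C + ((Sym2.lift ⟨fun u v => Q.degree u + Q.degree v,
              fun u v => Nat.add_comm _ _⟩ z : ℕ) : ℤ)) ^ 2 :=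
          sum_edge_subtype Q (fun z => (C + ((Sym2.lift ⟨fun u v => Q.degree u + Q.degree v,
              fun u v => Nat.add_comm _ _⟩ z : ℕ) : ℤ)) ^ 2)
      _ = ∑ z ∈ Q.edgeFinset, (C ^ 2
            + 2 * C * ((Sym2.lift ⟨fun u v => Q.degree u + Q.degree v,
              fun u v => Nat.add_comm _ _⟩ z : ℕ) : ℤ)
            + ((Sym2.lift ⟨fun u v => Q.degree u + Q.degree v,
              fun u v => Nat.add_comm _ _⟩ z : ℕ) : ℤ) ^ 2) := by
          refine Finset.sum_congr rfl fun z _ => by ring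
      _ = _ := by
          rw [Finset.sum_add_distrib, Finset.sum_add_distrib, Finset.sum_const,
            ← Finset.mul_sum, hD1, hD2, nsmul_eq_mul]
  have hB : (∑ h : Fin s, ∑ e : Q.edgeSet, (G.degree (Sum.inr (h, e)) : ℤ) ^ 2)
      = (s : ℤ) * ((Q.edgeFinset.card : ℤ) * C ^ 2 + 2 * C * (zagrebM1 Q : ℤ)
        + ((forgottenF Q : ℤ) + 2 * (zagrebM2 Q : ℤ))) := by
    rw [Finset.sum_congr rfl (fun h _ => hinnerB h), Finset.sum_const, Finset.card_univ,
      Fintype.card_fin, nsmul_eq_mul]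
  rw [hcast, hA, hB]
  ring
end

section
/- Let Q be a finite simple graph with n vertices and m edges. Then the first Zagreb index of the transformation graph Q_{rs}^{−−−} (the case p = 0, q = 0 of Q_{rs}^{x(p) y(q) −}) equals (r(s+1)² − 2s(m+r(n−2)+1))·M1(Q) + 2s·M2(Q) + s·F(Q) + nr(n+sm−1)² − 4mr(n+ms−1)(s+1) + ms(m+r(n−2)+1)². -/
section Aux
set_option linter.unusedSectionVars false
open Finset

variable {V : Type*} [Fintype V] (Q : SimpleGraph V)

lemma adj_inl_inl (r s : ℕ) (g g' : Fin r) (α β : V) :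
    (genTransMinus Q r s 0 0).Adj (Sum.inl (g, α)) (Sum.inl (g', β)) ↔
      g' = g ∧ α ≠ β ∧ ¬ Q.Adj α β := by
  simp only [genTransMinus, SimpleGraph.fromRel_adj, ne_eq, Sum.inl.injEq, Prod.mk.injEq]
  constructor
  · rintro ⟨h1, (⟨hg, h2⟩ | ⟨hg, h2⟩)⟩
    · exact ⟨hg.symm, fun hab => h1 ⟨hg, hab⟩, (h2.resolve_left (by simp)).2⟩
    · exact ⟨hg, fun hab => h1 ⟨hg.symm, hab⟩, fun h => ((h2.resolve_left (by simp)).2) h.symm⟩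
  · rintro ⟨rfl, hab, hadj⟩
    exact ⟨by rintro ⟨-, rfl⟩; exact hab rfl, Or.inl ⟨rfl, Or.inr ⟨by simp, hadj⟩⟩⟩

lemma adj_inl_inr (r s : ℕ) (g : Fin r) (h : Fin s) (α : V) (e : Q.edgeSet) :
    (genTransMinus Q r s 0 0).Adj (Sum.inl (g, α)) (Sum.inr (h, e)) ↔ α ∉ (e : Sym2 V) := by
  simp [genTransMinus, SimpleGraph.fromRel_adj]

lemma adj_inr_inr (r s : ℕ) (h h' : Fin s) (e f : Q.edgeSet) :
    (genTransMinus Q r s 0 0).Adj (Sum.inr (h, e)) (Sum.inr (h', f)) ↔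
      h' = h ∧ ¬ ∃ w, w ∈ (e : Sym2 V) ∧ w ∈ (f : Sym2 V) := by
  simp only [genTransMinus, SimpleGraph.fromRel_adj, ne_eq, Sum.inr.injEq, Prod.mk.injEq]
  constructor
  · rintro ⟨h1, (⟨hg, h2⟩ | ⟨hg, h2⟩)⟩
    · exact ⟨hg.symm, (h2.resolve_left (by simp)).2⟩
    · refine ⟨hg, fun ⟨w, hw1, hw2⟩ => (h2.resolve_left (by simp)).2 ⟨w, hw2, hw1⟩⟩
  · rintro ⟨rfl, hef⟩
    refine ⟨?_, Or.inl ⟨rfl, Or.inr ⟨by simp, hef⟩⟩⟩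
    rintro ⟨-, rfl⟩
    induction' he : (e : Sym2 V) with u v
    exact hef ⟨u, by rw [he]; simp, by rw [he]; simp⟩

open scoped Classical

lemma degree_eq_card_filter {W : Type*} [Fintype W] (G : SimpleGraph W) (v : W) :
    G.degree v = (univ.filter (G.Adj v)).card := by
  show (G.neighborFinset v).card = _
  congr 1; ext w; simp [SimpleGraph.mem_neighborFinset]

lemma countC1 (α : V) :
    (univ.filter (fun β => α ≠ β ∧ ¬ Q.Adj α β)).card + (1 + Q.degree α) = Fintype.card V := by
  have h : univ.filter (fun β => α ≠ β ∧ ¬ Q.Adj α β) = (insert α (Q.neighborFinset α))ᶜ := by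
    ext β
    simp only [mem_filter, mem_univ, true_and, mem_compl, mem_insert,
      SimpleGraph.mem_neighborFinset]
    tauto
  rw [h, Finset.card_compl, Finset.card_insert_of_notMem (by simp),
    SimpleGraph.card_neighborFinset_eq_degree]
  have hle : (insert α (Q.neighborFinset α)).card ≤ Fintype.card V := Finset.card_le_univ _
  rw [Finset.card_insert_of_notMem (by simp), SimpleGraph.card_neighborFinset_eq_degree] at hle
  omega

lemma countC2 (α : V) :
    (univ.filter (fun e : Q.edgeSet => α ∈ (e : Sym2 V))).card = Q.degree α := by
  rw [← Fintype.card_subtype]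
  have h : Fintype.card {e : Q.edgeSet // α ∈ (e : Sym2 V)}
      = Fintype.card (Q.incidenceSet α) := by
    apply Fintype.card_congr
    refine ⟨fun e => ⟨e.1.1, e.1.2, e.2⟩, fun e => ⟨⟨e.1, e.2.1⟩, e.2.2⟩, ?_, ?_⟩ <;>
      (intro e; rfl)
  rw [h, SimpleGraph.card_incidenceSet_eq_degree]

lemma countC3 (e : Q.edgeSet) :
    (univ.filter (fun β : V => β ∉ (e : Sym2 V))).card + 2 = Fintype.card V := by
  obtain ⟨z, hz⟩ := e
  induction' z with u v
  have huv : u ≠ v := (Q.mem_edgeSet.mp hz).ne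
  have h : univ.filter (fun β : V => β ∉ (s(u,v) : Sym2 V)) = ({u, v} : Finset V)ᶜ := by
    ext β; simp [Sym2.mem_iff]
  have h2 : ({u, v} : Finset V).card = 2 := by
    rw [Finset.card_insert_of_notMem (by simp [huv]), Finset.card_singleton]
  have hle : ({u, v} : Finset V).card ≤ Fintype.card V := Finset.card_le_univ _
  simp only [h, Finset.card_compl, h2] at *
  omega

lemma countC4 {u v : V} (huv : Q.Adj u v) :
    (univ.filter (fun f : Q.edgeSet => ¬ ∃ w, w ∈ (s(u,v) : Sym2 V) ∧ w ∈ (f : Sym2 V))).card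
      + Q.degree u + Q.degree v = Q.edgeFinset.card + 1 := by
  have hne : u ≠ v := huv.ne
  have key : (univ.filter (fun f : Q.edgeSet => ∃ w, w ∈ (s(u,v) : Sym2 V) ∧ w ∈ (f : Sym2 V))).card
      + 1 = Q.degree u + Q.degree v := by
    have hsplit : univ.filter (fun f : Q.edgeSet => ∃ w, w ∈ (s(u,v) : Sym2 V) ∧ w ∈ (f : Sym2 V))
        = (univ.filter (fun f : Q.edgeSet => u ∈ (f : Sym2 V)))
          ∪ (univ.filter (fun f : Q.edgeSet => v ∈ (f : Sym2 V))) := by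
      ext f
      simp only [mem_filter, mem_univ, true_and, mem_union, Sym2.mem_iff]
      constructor
      · rintro ⟨w, (rfl | rfl), hw⟩
        · exact Or.inl hw
        · exact Or.inr hw
      · rintro (hw | hw)
        · exact ⟨u, Or.inl rfl, hw⟩
        · exact ⟨v, Or.inr rfl, hw⟩
    have hinter : (univ.filter (fun f : Q.edgeSet => u ∈ (f : Sym2 V)))
        ∩ (univ.filter (fun f : Q.edgeSet => v ∈ (f : Sym2 V)))
        = {(⟨s(u,v), Q.mem_edgeSet.mpr huv⟩ : Q.edgeSet)} := by
      ext f
      simp only [mem_inter, mem_filter, mem_univ, true_and, mem_singleton]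
      constructor
      · rintro ⟨h1, h2⟩
        exact Subtype.ext ((Sym2.mem_and_mem_iff hne).mp ⟨h1, h2⟩)
      · rintro rfl
        simp
    have := Finset.card_union_add_card_inter
      (univ.filter (fun f : Q.edgeSet => u ∈ (f : Sym2 V)))
      (univ.filter (fun f : Q.edgeSet => v ∈ (f : Sym2 V)))
    rw [hinter, Finset.card_singleton, countC2, countC2] at this
    rw [hsplit]
    omega
  have hneg := Finset.card_filter_add_card_filter_not
    (s := (univ : Finset Q.edgeSet))
    (p := fun f : Q.edgeSet => ∃ w, w ∈ (s(u,v) : Sym2 V) ∧ w ∈ (f : Sym2 V))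
  rw [Finset.card_univ, ← SimpleGraph.edgeFinset_card] at hneg
  omega

lemma deg_inl (r s : ℕ) (g : Fin r) (α : V) :
    ((genTransMinus Q r s 0 0).degree (Sum.inl (g, α)) : ℤ)
      = (Fintype.card V : ℤ) + s * Q.edgeFinset.card - 1
        - ((s : ℤ) + 1) * Q.degree α := by
  have hnat : (genTransMinus Q r s 0 0).degree (Sum.inl (g, α))
      = (univ.filter (fun β => α ≠ β ∧ ¬ Q.Adj α β)).card
        + s * (univ.filter (fun e : Q.edgeSet => α ∉ (e : Sym2 V))).card := by
    rw [degree_eq_card_filter, Finset.card_filter, Fintype.sum_sum_type]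
    congr 1
    · rw [Fintype.sum_prod_type, Finset.sum_comm]
      simp only [adj_inl_inl, ite_and]
      simp only [Finset.sum_ite_eq', mem_univ, if_true]
      rw [Finset.card_filter]
      simp only [ite_and]
    · rw [Fintype.sum_prod_type]
      simp only [adj_inl_inr]
      rw [Finset.sum_const, Finset.card_univ, Fintype.card_fin, smul_eq_mul,
        Finset.card_filter]
  have h1 := countC1 Q α
  have h2 : (univ.filter (fun e : Q.edgeSet => α ∉ (e : Sym2 V))).card + Q.degree α
      = Q.edgeFinset.card := by
    have hneg := Finset.card_filter_add_card_filter_not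
      (s := (univ : Finset Q.edgeSet)) (p := fun e : Q.edgeSet => α ∈ (e : Sym2 V))
    rw [Finset.card_univ, ← SimpleGraph.edgeFinset_card, countC2] at hneg
    omega
  have ha : ((univ.filter (fun β => α ≠ β ∧ ¬ Q.Adj α β)).card : ℤ)
      = (Fintype.card V : ℤ) - 1 - Q.degree α := by omega
  have hb : ((univ.filter (fun e : Q.edgeSet => α ∉ (e : Sym2 V))).card : ℤ)
      = (Q.edgeFinset.card : ℤ) - Q.degree α := by omega
  rw [hnat]
  push_cast
  linear_combination ha + (s : ℤ) * hb

lemma adj_inr_inl (r s : ℕ) (g : Fin r) (h : Fin s) (α : V) (e : Q.edgeSet) :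
    (genTransMinus Q r s 0 0).Adj (Sum.inr (h, e)) (Sum.inl (g, α)) ↔ α ∉ (e : Sym2 V) := by
  rw [SimpleGraph.adj_comm]; exact adj_inl_inr Q r s g h α e

noncomputable def dsumZ (e : Sym2 V) : ℤ :=
  Sym2.lift ⟨fun u v => (Q.degree u : ℤ) + Q.degree v, fun u v => by ring⟩ e

lemma deg_inr (r s : ℕ) (h : Fin s) (e : Q.edgeSet) :
    ((genTransMinus Q r s 0 0).degree (Sum.inr (h, e)) : ℤ)
      = (r : ℤ) * ((Fintype.card V : ℤ) - 2) + Q.edgeFinset.card + 1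
        - dsumZ Q (e : Sym2 V) := by
  have hnat : (genTransMinus Q r s 0 0).degree (Sum.inr (h, e))
      = r * (univ.filter (fun β : V => β ∉ (e : Sym2 V))).card
        + (univ.filter
            (fun f : Q.edgeSet => ¬ ∃ w, w ∈ (e : Sym2 V) ∧ w ∈ (f : Sym2 V))).card := by
    rw [degree_eq_card_filter, Finset.card_filter, Fintype.sum_sum_type]
    congr 1
    · rw [Fintype.sum_prod_type]
      simp only [adj_inr_inl]
      rw [Finset.sum_const, Finset.card_univ, Fintype.card_fin, smul_eq_mul,
        Finset.card_filter]
    · rw [Fintype.sum_prod_type, Finset.sum_comm]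
      simp only [adj_inr_inr, ite_and]
      simp only [Finset.sum_ite_eq', mem_univ, if_true]
      rw [Finset.card_filter]
  rw [hnat]
  obtain ⟨z, hz⟩ := e
  induction' z with u v
  have huv : Q.Adj u v := Q.mem_edgeSet.mp hz
  have h3 := countC3 Q ⟨s(u,v), hz⟩
  have h4 := countC4 Q huv
  have hd : dsumZ Q ((⟨s(u,v), hz⟩ : Q.edgeSet) : Sym2 V)
      = (Q.degree u : ℤ) + Q.degree v := rfl
  rw [hd]
  push_cast
  have ha : (((univ.filter (fun β : V => β ∉ ((⟨s(u,v), hz⟩ : Q.edgeSet) : Sym2 V))).card : ℤ))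
      = (Fintype.card V : ℤ) - 2 := by omega
  have hb : ((univ.filter (fun f : Q.edgeSet =>
        ¬ ∃ w, w ∈ ((⟨s(u,v), hz⟩ : Q.edgeSet) : Sym2 V) ∧ w ∈ (f : Sym2 V))).card : ℤ)
      = (Q.edgeFinset.card : ℤ) + 1 - Q.degree u - Q.degree v := by
    have : ((univ.filter (fun f : Q.edgeSet =>
        ¬ ∃ w, w ∈ (s(u,v) : Sym2 V) ∧ w ∈ (f : Sym2 V))).card : ℤ)
      = (Q.edgeFinset.card : ℤ) + 1 - Q.degree u - Q.degree v := by omega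
    exact this
  linear_combination (r : ℤ) * ha + hb

lemma sum_edge_lift (f : V → ℤ) :
    ∑ e ∈ Q.edgeFinset, Sym2.lift ⟨fun u v => f u + f v, fun u v => by ring⟩ e
      = ∑ v, (Q.degree v : ℤ) * f v := by
  have step : ∀ e ∈ Q.edgeFinset,
      Sym2.lift ⟨fun u v => f u + f v, fun u v => by ring⟩ e
        = ∑ v, if v ∈ e then f v else 0 := by
    intro e he
    induction' e with a b
    have hab : a ≠ b := (Q.mem_edgeSet.mp (SimpleGraph.mem_edgeFinset.mp he)).ne
    rw [Sym2.lift_mk, ← Finset.sum_filter]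
    have hf : univ.filter (fun v => v ∈ (s(a,b) : Sym2 V)) = ({a, b} : Finset V) := by
      ext v; simp [Sym2.mem_iff]
    rw [hf, Finset.sum_pair hab]
  rw [Finset.sum_congr rfl step, Finset.sum_comm]
  refine Finset.sum_congr rfl fun v _ => ?_
  rw [← Finset.sum_filter]
  have : Q.edgeFinset.filter (fun e => v ∈ e) = Q.incidenceFinset v :=
    (SimpleGraph.incidenceFinset_eq_filter Q v).symm
  rw [this, Finset.sum_const, SimpleGraph.card_incidenceFinset_eq_degree,
    nsmul_eq_mul]

lemma sum_dsumZ : ∑ e ∈ Q.edgeFinset, dsumZ Q e = ∑ v, (Q.degree v : ℤ) ^ 2 := by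
  have h := sum_edge_lift Q (fun v => (Q.degree v : ℤ))
  calc ∑ e ∈ Q.edgeFinset, dsumZ Q e
      = ∑ v, (Q.degree v : ℤ) * Q.degree v := h
    _ = ∑ v, (Q.degree v : ℤ) ^ 2 := by refine Finset.sum_congr rfl fun v _ => by ring

lemma sum_liftmul :
    ∑ e ∈ Q.edgeFinset,
      Sym2.lift ⟨fun u v => (Q.degree u : ℤ) * Q.degree v, fun u v => by ring⟩ e
      = (zagrebM2 Q : ℤ) := by
  rw [zagrebM2, Nat.cast_sum]
  refine Finset.sum_congr rfl fun e he => ?_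
  induction' e with a b
  simp [Sym2.lift_mk]

lemma sum_dsumZ_sq :
    ∑ e ∈ Q.edgeFinset, (dsumZ Q e) ^ 2
      = (forgottenF Q : ℤ) + 2 * zagrebM2 Q := by
  have step : ∀ e ∈ Q.edgeFinset, (dsumZ Q e) ^ 2
      = Sym2.lift ⟨fun u v => ((Q.degree u : ℤ))^2 + ((Q.degree v : ℤ))^2, fun u v => by ring⟩ e
        + 2 * Sym2.lift ⟨fun u v => (Q.degree u : ℤ) * Q.degree v, fun u v => by ring⟩ e := by
    intro e he
    induction' e with a b
    simp only [dsumZ, Sym2.lift_mk]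
    ring
  rw [Finset.sum_congr rfl step, Finset.sum_add_distrib, ← Finset.mul_sum, sum_liftmul]
  have h := sum_edge_lift Q (fun v => (Q.degree v : ℤ) ^ 2)
  have hF : ∑ v, (Q.degree v : ℤ) * (Q.degree v : ℤ) ^ 2 = (forgottenF Q : ℤ) := by
    rw [forgottenF, Nat.cast_sum]
    refine Finset.sum_congr rfl fun v _ => by push_cast; ring
  rw [h, hF]

theorem zagrebM1_genTransMinus_mmm'
    (r s n m : ℕ) (hr : 0 < r) (hs : 0 < s)
    (hn : Fintype.card V = n) (hm : Q.edgeFinset.card = m) :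
    (zagrebM1 (genTransMinus Q r s 0 0) : ℤ) =
      ((r : ℤ) * ((s : ℤ) + 1) ^ 2
          - 2 * s * ((m : ℤ) + (r : ℤ) * ((n : ℤ) - 2) + 1)) * zagrebM1 Q
      + 2 * s * zagrebM2 Q + s * forgottenF Q
      + (n : ℤ) * r * ((n : ℤ) + s * m - 1) ^ 2
      - 4 * m * r * ((n : ℤ) + m * s - 1) * ((s : ℤ) + 1)
      + (m : ℤ) * s * ((m : ℤ) + (r : ℤ) * ((n : ℤ) - 2) + 1) ^ 2 := by
  subst hn; subst hm
  have hM1 : ∑ v, (Q.degree v : ℤ) ^ 2 = (zagrebM1 Q : ℤ) := by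
    rw [zagrebM1]; push_cast; rfl
  have hdeg : ∑ v, (Q.degree v : ℤ) = 2 * (Q.edgeFinset.card : ℤ) := by
    have hdc : ∀ v : V, @SimpleGraph.degree V Q v (Q.neighborSetFintype v)
        = @SimpleGraph.degree V Q v (fintypeNeighborSetOfFinite Q v) := fun v => by congr!
    have h := Q.sum_degrees_eq_twice_card_edges
    have hec : #(@SimpleGraph.edgeFinset V Q Q.fintypeEdgeSet)
        = #(@SimpleGraph.edgeFinset V Q (fintypeEdgeSetOfFinite Q)) := by congr!
    simp only [hdc, hec] at h
    exact_mod_cast congrArg (Nat.cast : ℕ → ℤ) h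
  have key : (zagrebM1 (genTransMinus Q r s 0 0) : ℤ)
      = ∑ x : (Fin r × V) ⊕ (Fin s × Q.edgeSet),
          (((genTransMinus Q r s 0 0).degree x : ℤ)) ^ 2 := by
    rw [zagrebM1]; push_cast; rfl
  rw [key, Fintype.sum_sum_type, Fintype.sum_prod_type, Fintype.sum_prod_type]
  simp only [deg_inl, deg_inr]
  rw [Finset.sum_const, Finset.sum_const, Finset.card_univ, Finset.card_univ,
    Fintype.card_fin, Fintype.card_fin, nsmul_eq_mul, nsmul_eq_mul]
  set N : ℤ := (Fintype.card V : ℤ) with hN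
  set M : ℤ := (Q.edgeFinset.card : ℤ) with hM
  have e1 : ∑ α, (N + (s : ℤ) * M - 1 - ((s : ℤ) + 1) * (Q.degree α : ℤ)) ^ 2
      = N * (N + (s : ℤ) * M - 1) ^ 2 + ((s : ℤ) + 1) ^ 2 * (zagrebM1 Q : ℤ)
        - 2 * (N + (s : ℤ) * M - 1) * ((s : ℤ) + 1) * (2 * M) := by
    have hc : ∀ α ∈ (univ : Finset V),
        (N + (s : ℤ) * M - 1 - ((s : ℤ) + 1) * (Q.degree α : ℤ)) ^ 2
          = (N + (s : ℤ) * M - 1) ^ 2 + ((s : ℤ) + 1) ^ 2 * (Q.degree α : ℤ) ^ 2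
            - 2 * (N + (s : ℤ) * M - 1) * ((s : ℤ) + 1) * (Q.degree α : ℤ) :=
      fun α _ => by ring
    rw [Finset.sum_congr rfl hc, Finset.sum_sub_distrib, Finset.sum_add_distrib,
      ← Finset.mul_sum, ← Finset.mul_sum, hM1, hdeg, Finset.sum_const,
      Finset.card_univ, nsmul_eq_mul]
  have hsub : ∑ e : Q.edgeSet, ((r : ℤ) * (N - 2) + M + 1 - dsumZ Q (e : Sym2 V)) ^ 2
      = ∑ e ∈ Q.edgeFinset, ((r : ℤ) * (N - 2) + M + 1 - dsumZ Q e) ^ 2 :=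
    by
    have h := Finset.sum_set_coe (s := Q.edgeSet)
      (f := fun e => ((r : ℤ) * (N - 2) + M + 1 - dsumZ Q e) ^ 2)
    exact h
  have e2 : ∑ e ∈ Q.edgeFinset, ((r : ℤ) * (N - 2) + M + 1 - dsumZ Q e) ^ 2
      = M * ((r : ℤ) * (N - 2) + M + 1) ^ 2
        + ((forgottenF Q : ℤ) + 2 * (zagrebM2 Q : ℤ))
        - 2 * ((r : ℤ) * (N - 2) + M + 1) * (zagrebM1 Q : ℤ) := by
    have hc : ∀ e ∈ Q.edgeFinset,
        ((r : ℤ) * (N - 2) + M + 1 - dsumZ Q e) ^ 2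
          = ((r : ℤ) * (N - 2) + M + 1) ^ 2 + (dsumZ Q e) ^ 2
            - 2 * ((r : ℤ) * (N - 2) + M + 1) * dsumZ Q e :=
      fun e _ => by ring
    rw [Finset.sum_congr rfl hc, Finset.sum_sub_distrib, Finset.sum_add_distrib,
      ← Finset.mul_sum, sum_dsumZ_sq, sum_dsumZ, hM1, Finset.sum_const,
      nsmul_eq_mul]
  rw [e1, hsub, e2]
  ring

end Aux

/-- First Zagreb index of `Q_{rs}^{---}`, i.e. the case `p = 0`, `q = 0`. -/
theorem zagrebM1_genTransMinus_mmm
    {V : Type*} [Fintype V] (Q : SimpleGraph V)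
    (r s n m : ℕ) (hr : 0 < r) (hs : 0 < s)
    (hn : Fintype.card V = n) (hm : Q.edgeFinset.card = m) :
    (zagrebM1 (genTransMinus Q r s 0 0) : ℤ) =
      ((r : ℤ) * ((s : ℤ) + 1) ^ 2
          - 2 * s * ((m : ℤ) + (r : ℤ) * ((n : ℤ) - 2) + 1)) * zagrebM1 Q
      + 2 * s * zagrebM2 Q + s * forgottenF Q
      + (n : ℤ) * r * ((n : ℤ) + s * m - 1) ^ 2
      - 4 * m * r * ((n : ℤ) + m * s - 1) * ((s : ℤ) + 1)
      + (m : ℤ) * s * ((m : ℤ) + (r : ℤ) * ((n : ℤ) - 2) + 1) ^ 2 := by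
  exact zagrebM1_genTransMinus_mmm' Q r s n m hr hs hn hm
end
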